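/- arXiv:math/0004106 — 3 statements merged into one kernel-verified Lean document; each statement's English description precedes it below -/
import Mathlib

section
/- For r = 1, 2 let X_r be a Banach space with a shrinking Schauder basis (e_k^r) satisfying the (d_r, N_r, P_r, a) distortion property, where the same sequence a = (δ_i) satisfies lim_i δ_{i+1}/δ_i = 0. Write N_r = (n_k^r)_{k=1}^∞. Suppose that for every i_0 ∈ ℕ there exist i > j > i_0 with n_i^1 = n_j^2. Then X_1 and X_2 are totally incomparable. -/
open Filter Topology

open scoped Classical

noncomputable section

namespace Gasparis

/-! ## Schreier families and admissibility -/

/-- `E < F` for finite sets: every element of `E` is smaller than every element of `F`. -/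
def FinLt (E F : Finset ℕ) : Prop := ∀ i ∈ E, ∀ j ∈ F, i < j

/-- The Schreier families `S_n`. -/
def Schreier : ℕ → Set (Finset ℕ)
  | 0 => {F | F.card ≤ 1}
  | n + 1 => {F | F = ∅ ∨ ∃ (k : ℕ) (G : ℕ → Finset ℕ), 0 < k ∧
      (∀ i < k, G i ∈ Schreier n ∧ (G i).Nonempty) ∧
      (∀ i j, i < j → j < k → FinLt (G i) (G j)) ∧
      (∀ j ∈ G 0, k ≤ j) ∧
      F = (Finset.range k).biUnion G}

/-- Minimum of a finite set of naturals (junk value `0` for `∅`). -/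
def minF (I : Finset ℕ) : ℕ := sInf (I : Set ℕ)

/-- Minimum of the support of a finitely supported sequence. -/
def minSupp (f : ℕ →₀ ℝ) : ℕ := minF f.support

/-- `I 0 < I 1 < ⋯ < I (k-1)` is an `S_n`-admissible collection. -/
def Admissible (n k : ℕ) (I : ℕ → Finset ℕ) : Prop :=
  (∀ i < k, (I i).Nonempty) ∧
  (∀ i j, i < j → j < k → FinLt (I i) (I j)) ∧
  ((Finset.range k).image fun i => minF (I i)) ∈ Schreier n

/-- An (unordered) family of finite sets is `S_n`-admissible. -/
def FamAdmissible (n : ℕ) (𝓕 : Finset (Finset ℕ)) : Prop :=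
  (∀ I ∈ 𝓕, I.Nonempty) ∧
  (∀ I ∈ 𝓕, ∀ J ∈ 𝓕, I ≠ J → FinLt I J ∨ FinLt J I) ∧
  𝓕.image minF ∈ Schreier n

/-- `F` is a maximal (under inclusion) member of `S_n`. -/
def MaximalSchreier (n : ℕ) (F : Finset ℕ) : Prop :=
  F ∈ Schreier n ∧ ∀ G ∈ Schreier n, F ⊆ G → G = F

/-! ## The Schreier and conditional Schreier norms on `c₀₀ = ℕ →₀ ℝ` -/

/-- The `n`-th Schreier norm on `c₀₀`. -/
def schreierNorm (n : ℕ) (x : ℕ →₀ ℝ) : ℝ :=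
  sSup {r : ℝ | ∃ F ∈ Schreier n, r = ∑ i ∈ F, |x i|}

/-- The `n`-th conditional Schreier norm on `c₀₀`. -/
def cschreierNorm (n : ℕ) (x : ℕ →₀ ℝ) : ℝ :=
  sSup {r : ℝ | ∃ (k : ℕ) (J : ℕ → Finset ℕ),
    (∀ i < k, ∃ a b : ℕ, J i = Finset.Icc a b) ∧ Admissible n k J ∧
    r = ∑ i ∈ Finset.range k, |∑ p ∈ J i, x p|}

/-! ## Block sequences, described by their coefficients -/

/-- A block basis, given by the (finitely supported) coefficient sequences of its vectors:
successive nonempty supports. -/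
def IsBlockSeq (u : ℕ → ℕ →₀ ℝ) : Prop :=
  (∀ k, u k ≠ 0) ∧ ∀ k, ∀ i ∈ (u k).support, ∀ j ∈ (u (k + 1)).support, i < j

/-- `v` is a block basis of the block basis `u`. -/
def IsBlockSeqOf (v u : ℕ → ℕ →₀ ℝ) : Prop :=
  IsBlockSeq v ∧ ∃ d : ℕ → ℕ →₀ ℝ, IsBlockSeq d ∧
    ∀ k, v k = (d k).sum fun i a => a • u i

/-- The vector of `X` with coefficients `f` with respect to the sequence `e`. -/
def vecIn {X : Type*} [AddCommGroup X] [Module ℝ X] (e : ℕ → X) (f : ℕ →₀ ℝ) : X :=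
  f.sum fun i a => a • e i

/-! ## Schauder bases -/

/-- A Schauder basis of a Banach space, bundled with its biorthogonal functionals. -/
structure SchauderBasis (X : Type*) [NormedAddCommGroup X] [NormedSpace ℝ X] where
  e : ℕ → X
  coord : ℕ → X →L[ℝ] ℝ
  biorth : ∀ i j, coord i (e j) = if i = j then (1 : ℝ) else 0
  expand : ∀ x : X, Tendsto (fun k => ∑ i ∈ Finset.range k, coord i x • e i) atTop (𝓝 x)

variable {X : Type*}

def NormalizedBasis [NormedAddCommGroup X] [NormedSpace ℝ X] (b : SchauderBasis X) : Prop :=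
  ∀ i, ‖b.e i‖ = 1

/-- Every projection onto an interval of coordinates has norm at most `1`. -/
def Bimonotone [NormedAddCommGroup X] [NormedSpace ℝ X] (b : SchauderBasis X) : Prop :=
  ∀ (x : X) (a c : ℕ), ‖∑ i ∈ Finset.Icc a c, b.coord i x • b.e i‖ ≤ ‖x‖

/-- The biorthogonal functionals form a basis of the dual: the expansion of every
continuous functional converges to it. -/
def Shrinking [NormedAddCommGroup X] [NormedSpace ℝ X] (b : SchauderBasis X) : Prop :=
  ∀ f : X →L[ℝ] ℝ,
    Tendsto (fun k => ‖f - ∑ i ∈ Finset.range k, f (b.e i) • b.coord i‖) atTop (𝓝 (0 : ℝ))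

def BoundedlyComplete [NormedAddCommGroup X] [NormedSpace ℝ X] (b : SchauderBasis X) : Prop :=
  ∀ a : ℕ → ℝ, (∃ C : ℝ, ∀ k, ‖∑ i ∈ Finset.range k, a i • b.e i‖ ≤ C) →
    ∃ x : X, Tendsto (fun k => ∑ i ∈ Finset.range k, a i • b.e i) atTop (𝓝 x)

/-- `1`-unconditionality: changing signs of coefficients does not increase the norm. -/
def OneUnconditional [NormedAddCommGroup X] [NormedSpace ℝ X] (b : SchauderBasis X) : Prop :=
  ∀ (a ε : ℕ → ℝ) (F : Finset ℕ), (∀ i, ε i = 1 ∨ ε i = -1) →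
    ‖∑ i ∈ F, (ε i * a i) • b.e i‖ ≤ ‖∑ i ∈ F, a i • b.e i‖

/-! ## Spreading models, asymptotic `ℓ¹` and the distortion property -/

/-- `(x_n)` is an `ε`-`ℓ¹ⁿ` spreading model. -/
def SpreadingModelL1 [NormedAddCommGroup X] [NormedSpace ℝ X]
    (x : ℕ → X) (ε : ℝ) (n : ℕ) : Prop :=
  ∀ F ∈ Schreier n, ∀ a : ℕ → ℝ, ε * ∑ i ∈ F, |a i| ≤ ‖∑ i ∈ F, a i • x i‖

/-- Every normalized block basis of `(e_n)` is an `ε`-`ℓ¹ⁿ` spreading model. -/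
def AsymptoticL1 [NormedAddCommGroup X] [NormedSpace ℝ X]
    (b : SchauderBasis X) (ε : ℝ) (n : ℕ) : Prop :=
  ∀ u : ℕ → ℕ →₀ ℝ, IsBlockSeq u → (∀ k, ‖vecIn b.e (u k)‖ = 1) →
    SpreadingModelL1 (fun k => vecIn b.e (u k)) ε n

/-- The modulus `τ(U, δ) ∈ ℕ∞` of the block subspace `U` generated by the block basis `u`. -/
def tau [NormedAddCommGroup X] [NormedSpace ℝ X]
    (e : ℕ → X) (u : ℕ → ℕ →₀ ℝ) (δ : ℝ) : ℕ∞ :=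
  sSup {z : ℕ∞ | ∃ ζ : ℕ, z = (ζ : ℕ∞) ∧
    ∀ v : ℕ → ℕ →₀ ℝ, IsBlockSeqOf v u → (∀ k, ‖vecIn e (v k)‖ = 1) →
      ∃ φ : ℕ → ℕ, StrictMono φ ∧ SpreadingModelL1 (fun k => vecIn e (v (φ k))) δ ζ}

/-- The `(d, N, P, a)` distortion property (with the standing assumptions on `d, N, P, a`). -/
structure DistortionProperty [NormedAddCommGroup X] [NormedSpace ℝ X]
    (b : SchauderBasis X) (d : ℝ) (N P : ℕ → ℕ) (δ : ℕ → ℝ) : Prop where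
  one_lt_d : 1 < d
  N_mono : StrictMono N
  P_mono : StrictMono P
  N_le_P : ∀ i, (if i = 0 then 1 else N (i - 1)) ≤ P i
  P_lt_N : ∀ i, 2 * P i < N i
  δ_pos : ∀ i, 0 < δ i
  δ_anti : ∀ i, δ (i + 1) ≤ δ i
  δ_null : Tendsto δ atTop (𝓝 (0 : ℝ))
  asymptotic : ∀ j, AsymptoticL1 b (δ j) (N j)
  tau_lt : ∀ j, ∀ u : ℕ → ℕ →₀ ℝ, IsBlockSeq u → tau b.e u (d * δ j) < (P j : ℕ∞)

/-! ## Subspaces, hereditary indecomposability, total incomparability, distortion -/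

/-- An (infinite-dimensional, closed) subspace of a Banach space. -/
def IsBanachSubspace [NormedAddCommGroup X] [NormedSpace ℝ X] (Y : Submodule ℝ X) : Prop :=
  IsClosed (Y : Set X) ∧ ¬ FiniteDimensional ℝ Y

/-- Hereditarily indecomposable. -/
def HI (X : Type*) [NormedAddCommGroup X] [NormedSpace ℝ X] : Prop :=
  ∀ Y Z : Submodule ℝ X, IsBanachSubspace Y → IsBanachSubspace Z → Y ⊓ Z = ⊥ →
    ¬ IsClosed ((Y ⊔ Z : Submodule ℝ X) : Set X)

/-- No subspace of `X` is isomorphic to a subspace of `Y`. -/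
def TotallyIncomparable (X Y : Type*) [NormedAddCommGroup X] [NormedSpace ℝ X]
    [NormedAddCommGroup Y] [NormedSpace ℝ Y] : Prop :=
  ∀ (U : Submodule ℝ X) (V : Submodule ℝ Y), IsBanachSubspace U → IsBanachSubspace V →
    IsEmpty (U ≃L[ℝ] V)

/-- An equivalent norm on `X`. -/
structure IsEquivNorm [NormedAddCommGroup X] [NormedSpace ℝ X] (Nn : X → ℝ) : Prop where
  add_le : ∀ x y : X, Nn (x + y) ≤ Nn x + Nn y
  smul_eq : ∀ (a : ℝ) (x : X), Nn (a • x) = |a| * Nn x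
  lower : ∃ c : ℝ, 0 < c ∧ ∀ x : X, c * ‖x‖ ≤ Nn x
  upper : ∃ C : ℝ, 0 < C ∧ ∀ x : X, Nn x ≤ C * ‖x‖

def ArbitrarilyDistortable (X : Type*) [NormedAddCommGroup X] [NormedSpace ℝ X] : Prop :=
  ∀ lam : ℝ, 1 < lam → ∃ Nn : X → ℝ, IsEquivNorm Nn ∧
    ∀ Y : Submodule ℝ X, IsBanachSubspace Y →
      ∃ x ∈ Y, ∃ y ∈ Y, x ≠ 0 ∧ y ≠ 0 ∧ ‖x‖ = ‖y‖ ∧ lam < Nn x / Nn y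

/-- Reflexivity: the canonical embedding into the double dual is surjective. -/
def IsReflexiveSpace (X : Type*) [NormedAddCommGroup X] [NormedSpace ℝ X] : Prop :=
  Function.Surjective (NormedSpace.inclusionInDoubleDual ℝ X)

/-- A bundled (real, infinite-dimensional or not) Banach space. -/
structure BanachSpaceB where
  carrier : Type
  [grp : NormedAddCommGroup carrier]
  [mod : NormedSpace ℝ carrier]
  [comp : CompleteSpace carrier]

attribute [instance] BanachSpaceB.grp BanachSpaceB.mod BanachSpaceB.comp

/-! ## `M`-good sequences -/

/-- The sequence `f_j^N` (0-indexed: `fN m n j` is the paper's `f_{j+1}^N`). -/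
def fN (m n : ℕ → ℕ) : ℕ → ℕ
  | 0 => 1
  | j + 1 => sSup {s : ℕ | ∃ ρ : ℕ → ℕ,
      (∏ i ∈ Finset.range (j + 1), m i ^ ρ i) < m (j + 1) ^ 3 ∧
      s = ∑ i ∈ Finset.range (j + 1), ρ i * n i}

/-- Standing assumptions on the fixed sequences `M = (m_i)` and `L = (l_i)`. -/
structure MLParams (m l : ℕ → ℕ) : Prop where
  m_mono : StrictMono m
  m_six : 6 < m 0
  m_sq : ∀ i, m i ^ 2 < m (i + 1)
  l_mono : StrictMono l
  l_four : 4 < l 0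
  l_exp : ∀ i, m i < 2 ^ l i

/-- `N = (n_i)` (an infinite subset of `ℕ`, given by its increasing enumeration)
is `M`-good: `l_j (f_j^N + 1) < n_j` for all `j`. -/
def MGoodSeq (m l n : ℕ → ℕ) : Prop :=
  StrictMono n ∧ ∀ j, l j * (fN m n j + 1) < n j

/-! ## Appropriate trees -/

/-- A node of a tree: a nonempty list of triples `(m-entry, interval, sign)`. -/
abbrev GNode := List (ℕ × Finset ℕ × ℤ)

def mEnt (α : GNode) : ℕ := (α.getLastD (0, ∅, 1)).1
def iEnt (α : GNode) : Finset ℕ := (α.getLastD (0, ∅, 1)).2.1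
def sEnt (α : GNode) : ℤ := (α.getLastD (0, ∅, 1)).2.2

/-- `α` is a terminal node of the tree `T`. -/
def IsTerminalIn (T : Finset GNode) (α : GNode) : Prop :=
  ∀ β ∈ T, α <+: β → β = α

/-- The immediate successors of `α` in `T`. -/
def childrenIn (T : Finset GNode) (α : GNode) : Finset GNode :=
  T.filter fun β => β.length = α.length + 1 ∧ α <+: β

/-- Appropriate trees (with respect to the data `M = (m_i)`, `N = (n_i)`). -/
def IsAppropriate (m n : ℕ → ℕ) (T : Finset GNode) : Prop :=
  T.Nonempty ∧
  (∀ α ∈ T, α ≠ []) ∧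
  (∀ α ∈ T, ∀ k, 0 < k → k ≤ α.length → α.take k ∈ T) ∧
  (∀ α ∈ T, ∀ β ∈ T, α.length = 1 → β.length = 1 → α = β) ∧
  (∀ α ∈ T, ∀ t ∈ α, ((t : ℕ × Finset ℕ × ℤ).2.2 = 1 ∨ t.2.2 = -1) ∧ t.2.1.Nonempty) ∧
  (∀ α ∈ T, IsTerminalIn T α → mEnt α = 0 ∧ ∃ p : ℕ, iEnt α = {p}) ∧
  (∀ α ∈ T, ¬ IsTerminalIn T α → ∃ j : ℕ, mEnt α = m j ∧
    FamAdmissible (n j) ((childrenIn T α).image iEnt) ∧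
    iEnt α = (childrenIn T α).sup iEnt)

/-- The family `𝒢` of appropriate trees. -/
def 𝒢 (m n : ℕ → ℕ) : Set (Finset GNode) := {T | IsAppropriate m n T}

/-- The root of a tree. -/
def rootOf (T : Finset GNode) : GNode :=
  if h : (T.filter fun α => α.length = 1).Nonempty then h.choose else []

/-- `m(α)`: product of the `M`-entries of the predecessor of `α`. -/
def mWeight (α : GNode) : ℕ := (α.dropLast.map fun t => t.1).prod

/-- `ε(α)`: product of the signs of the proper predecessors of `α`. -/
def epsProd (α : GNode) : ℤ := (α.dropLast.map fun t => t.2.2).prod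

/-- `n(α)`: sum of the `n_i` over the `M`-entries `m_i` of the predecessor of `α`. -/
def nVal (m n : ℕ → ℕ) (α : GNode) : ℕ :=
  (α.dropLast.map fun t => n (sInf {j | m j = t.1})).sum

/-- The point `p_α` of a terminal node. -/
def pOf (α : GNode) : ℕ := minF (iEnt α)

/-- The measure `mu_𝒯` associated to a tree. -/
def treeMeasure (T : Finset GNode) : ℕ →₀ ℝ :=
  ∑ α ∈ T.filter (fun α => IsTerminalIn T α),
    ((mWeight α : ℝ)⁻¹ * ((epsProd α * sEnt α : ℤ) : ℝ)) • Finsupp.single (pOf α) (1 : ℝ)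

/-- The weight `w(𝒯)`. -/
def treeWeight (T : Finset GNode) : ℕ :=
  if T.card = 1 then 1 else mEnt (rootOf T)

/-- Action of a finitely supported measure on an element of `c₀₀`. -/
def mpair (mu x : ℕ →₀ ℝ) : ℝ := mu.sum fun i c => c * x i

/-- The norming set `𝓜 = {mu_𝒯 : 𝒯 ∈ 𝒢}`. -/
def normingSetOf (m n : ℕ → ℕ) : Set (ℕ →₀ ℝ) :=
  {mu | ∃ T ∈ 𝒢 m n, mu = treeMeasure T}

/-- The norm of `X_𝓜` on `c₀₀`. -/
def mNorm (m n : ℕ → ℕ) (x : ℕ →₀ ℝ) : ℝ :=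
  sSup {r : ℝ | ∃ mu ∈ normingSetOf m n, r = mpair mu x}

/-- A family of trees is `S_k`-admissible if the family of root intervals is. -/
def TreeFamAdmissible (k : ℕ) (G₀ : Finset (Finset GNode)) : Prop :=
  FamAdmissible k (G₀.image fun T => iEnt (rootOf T))

/-! ## The repeated averages hierarchy -/

/-- Auxiliary step for the repeated averages hierarchy. -/
def ravgS (f : Set ℕ → ℕ → (ℕ →₀ ℝ)) (R : Set ℕ) : ℕ → (ℕ →₀ ℝ)
  | 0 => ((sInf R : ℕ) : ℝ)⁻¹ • ∑ i ∈ Finset.range (sInf R), f R i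
  | k + 1 =>
    let R' : Set ℕ := {r ∈ R | ∀ j ∈ (ravgS f R k).support, j < r}
    ((sInf R' : ℕ) : ℝ)⁻¹ • ∑ i ∈ Finset.range (sInf R'), f R' i

/-- The repeated averages hierarchy `ξ_k^R` (`k` 0-indexed). -/
def ravg : ℕ → Set ℕ → ℕ → (ℕ →₀ ℝ)
  | 0 => fun R k => Finsupp.single (Nat.nth (· ∈ R) k) 1
  | ξ + 1 => ravgS (ravg ξ)

/-- `‖mu‖_k = sup{mu(F) : F ∈ S_k}`. -/
def measNorm (k : ℕ) (mu : ℕ →₀ ℝ) : ℝ :=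
  sSup {r : ℝ | ∃ F ∈ Schreier k, r = ∑ i ∈ F, mu i}

/-- The sequence of minima of supports of a block basis. -/
def pSeq (u : ℕ → ℕ →₀ ℝ) (k : ℕ) : ℕ := minSupp (u k)

/-- `v` is a generic `(ε, ξ)` average of the block basis `u`. -/
def IsGenericAvg (u : ℕ → ℕ →₀ ℝ) (ε : ℝ) (ξ : ℕ) (v : ℕ →₀ ℝ) : Prop :=
  ∃ R : Set ℕ, R.Infinite ∧ R ⊆ Set.range (pSeq u) ∧
    measNorm (ξ - 1) (ravg ξ R 0) < ε ∧
    v = (ravg ξ R 0).sum fun q c => c • u (sInf {k | pSeq u k = q})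

/-- `v` is an `(ε, ξ)` average of `u`: a generic `(ε, ξ)` average of a normalized
(w.r.t. the norm `nrm`) block basis of `u`. -/
def IsAvg (nrm : (ℕ →₀ ℝ) → ℝ) (u : ℕ → ℕ →₀ ℝ) (ε : ℝ) (ξ : ℕ) (v : ℕ →₀ ℝ) : Prop :=
  ∃ w : ℕ → ℕ →₀ ℝ, IsBlockSeqOf w u ∧ (∀ k, nrm (w k) = 1) ∧ IsGenericAvg w ε ξ v

/-- `x` is a smoothly normalized `(ε, ξ)` average of `u`. -/
def IsSmoothNormAvg (nrm : (ℕ →₀ ℝ) → ℝ) (u : ℕ → ℕ →₀ ℝ) (ε : ℝ) (ξ : ℕ)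
    (x : ℕ →₀ ℝ) : Prop :=
  ∃ v : ℕ →₀ ℝ, IsAvg nrm u ε ξ v ∧ (1 : ℝ) / 2 ≤ nrm v ∧ x = (nrm v)⁻¹ • v

/-! ## Infinite subsets of `ℕ` as points of the Cantor space -/

/-- The increasing enumeration of the set coded by `S : ℕ → Bool` (1st element = index 0). -/
def enumOf (S : ℕ → Bool) : ℕ → ℕ := Nat.nth fun i => S i = true

/-- The set coded by `S` is `M`-good. -/
def MGoodB (m l : ℕ → ℕ) (S : ℕ → Bool) : Prop := MGoodSeq m l (enumOf S)

/-- The infinite subsets of the set coded by `N₀`, as a topological (sub)space of the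
Cantor space `ℕ → Bool` with the product (pointwise convergence) topology. -/
def SubsetsOf (N₀ : ℕ → Bool) : Type :=
  {S : ℕ → Bool // {i | S i = true}.Infinite ∧ ∀ i, S i = true → N₀ i = true}

instance (N₀ : ℕ → Bool) : TopologicalSpace (SubsetsOf N₀) :=
  instTopologicalSpaceSubtype

/-!
Let `T : U → V` be an isomorphism between subspaces of `X₁` and `X₂`. A gliding hump gives
normalized blocks `f k` of `b₁` and blocks `g k` of `b₂` with `f k ≈ x k ∈ U` and `g k ≈ T (x k)`,
with summable errors. The coefficients of a normalized block `∑ D i • f i` are bounded by the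
basis constant, so it stays close to `∑ D i • x i`, whose image is close to `∑ D i • g i`.
Choose `i > j` with `N₁ i = N₂ j` and `δ i` much smaller than `δ j`, as `δ (i+1) / δ i → 0`.
Since `X₂` is asymptotic `δ j`-`ℓ¹^{N₂ j}`, pulling back through `T` makes every normalized
block basis of `(f k)` a `d₁ δ i`-`ℓ¹^{N₁ i}` spreading model. Thus `τ(f, d₁ δ i) ≥ N₁ i > P₁ i`,
against the distortion property of `X₁`.
-/

section Basis

variable [NormedAddCommGroup X] [NormedSpace ℝ X]

theorem vecIn_eq_linearCombination (e : ℕ → X) (f : ℕ →₀ ℝ) :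
    vecIn e f = Finsupp.linearCombination ℝ e f :=
  (Finsupp.linearCombination_apply ℝ f).symm

theorem vecIn_smul (e : ℕ → X) (c : ℝ) (f : ℕ →₀ ℝ) : vecIn e (c • f) = c • vecIn e f := by
  simp only [vecIn_eq_linearCombination, map_smul]

theorem vecIn_finsuppSum (e : ℕ → X) (D : ℕ →₀ ℝ) (f : ℕ → ℕ →₀ ℝ) :
    vecIn e (D.sum fun i a => a • f i) = D.sum fun i a => a • vecIn e (f i) := by
  simp only [vecIn_eq_linearCombination, map_finsuppSum, map_smul]

theorem vecIn_eq_sum_of_support_subset (e : ℕ → X) {f : ℕ →₀ ℝ} {s : Finset ℕ}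
    (hf : f.support ⊆ s) : vecIn e f = ∑ i ∈ s, f i • e i :=
  Finsupp.sum_of_support_subset f hf _ fun _ _ => zero_smul ℝ _

namespace SchauderBasis

theorem coord_vecIn (b : SchauderBasis X) (f : ℕ →₀ ℝ) (l : ℕ) :
    b.coord l (vecIn b.e f) = f l := by
  rw [vecIn, map_finsuppSum, Finsupp.sum_eq_single l]
  · simp [b.biorth]
  · intro i _ hil
    simp [b.biorth, Ne.symm hil]
  · simp

def toGeneralSchauderBasis (b : SchauderBasis X) : _root_.SchauderBasis ℝ X where
  basis := b.e
  coord := b.coord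
  ortho i j := by simp [b.biorth, Pi.single_apply]
  expansion x := by
    rw [HasSum, SummationFilter.conditional_filter_eq_map_range, tendsto_map'_iff]
    exact b.expand x

theorem exists_norm_sum_Ico_le [CompleteSpace X] (b : SchauderBasis X) :
    ∃ K : ℝ, 0 < K ∧
      ∀ (x : X) (a c : ℕ), ‖∑ l ∈ Finset.Ico a c, b.coord l x • b.e l‖ ≤ K * ‖x‖ := by
  obtain ⟨C, hC⟩ := b.toGeneralSchauderBasis.exists_norm_proj_le
  have hC0 : 0 ≤ C := (norm_nonneg _).trans (hC 0)
  refine ⟨2 * C + 1, by linarith, fun x a c => ?_⟩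
  have hproj (n : ℕ) : ‖∑ l ∈ Finset.range n, b.coord l x • b.e l‖ ≤ C * ‖x‖ := by
    have h := (b.toGeneralSchauderBasis.proj n).le_of_opNorm_le (hC n) x
    rwa [_root_.SchauderBasis.proj_apply] at h
  rcases le_total a c with hac | hca
  · rw [Finset.sum_Ico_eq_sub _ hac]
    nlinarith [norm_sub_le (∑ l ∈ Finset.range c, b.coord l x • b.e l)
      (∑ l ∈ Finset.range a, b.coord l x • b.e l), hproj a, hproj c, norm_nonneg x]
  · rw [Finset.Ico_eq_empty_of_le hca, Finset.sum_empty, norm_zero]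
    positivity

end SchauderBasis

end Basis

section Blocks

variable {ν : ℕ → ℕ} {f : ℕ → ℕ →₀ ℝ}

theorem eq_of_mem_Ico_of_mem_Ico (hν : Monotone ν) {i k l : ℕ}
    (hi : l ∈ Finset.Ico (ν i) (ν (i + 1))) (hk : l ∈ Finset.Ico (ν k) (ν (k + 1))) : i = k := by
  rw [Finset.mem_Ico] at hi hk
  by_contra hik
  rcases Nat.lt_or_gt_of_ne hik with h | h
  · have := hν (show i + 1 ≤ k by omega); omega
  · have := hν (show k + 1 ≤ i by omega); omega

theorem finsuppSum_smul_apply_of_mem_Ico (hν : Monotone ν)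
    (hf : ∀ k, (f k).support ⊆ Finset.Ico (ν k) (ν (k + 1))) (D : ℕ →₀ ℝ) {i l : ℕ}
    (hl : l ∈ Finset.Ico (ν i) (ν (i + 1))) :
    (D.sum fun k a => a • f k) l = D i * f i l := by
  rw [Finsupp.sum_apply, Finsupp.sum_eq_single i]
  · rfl
  · intro k _ hki
    have hfk : f k l = 0 := by
      by_contra h
      exact hki (eq_of_mem_Ico_of_mem_Ico hν (hf k (Finsupp.mem_support_iff.mpr h)) hl)
    simp [hfk]
  · simp

theorem mem_Ico_of_mem_support_finsuppSum (hf : ∀ k, (f k).support ⊆ Finset.Ico (ν k) (ν (k + 1)))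
    {D : ℕ →₀ ℝ} {l : ℕ} (hl : l ∈ (D.sum fun k a => a • f k).support) :
    ∃ k ∈ D.support, l ∈ Finset.Ico (ν k) (ν (k + 1)) := by
  obtain ⟨k, hk, hlk⟩ := Finset.mem_biUnion.mp (Finsupp.support_finsetSum hl)
  exact ⟨k, hk, hf k (Finsupp.support_smul hlk)⟩

theorem isBlockSeq_of_support_subset_Ico
    (hf : ∀ k, (f k).support ⊆ Finset.Ico (ν k) (ν (k + 1))) (hne : ∀ k, f k ≠ 0) :
    IsBlockSeq f := by
  refine ⟨hne, fun k i hi j hj => ?_⟩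
  have hi := Finset.mem_Ico.mp (hf k hi)
  have hj := Finset.mem_Ico.mp (hf (k + 1) hj)
  omega

theorem isBlockSeq_finsuppSum (hν : Monotone ν)
    (hf : ∀ k, (f k).support ⊆ Finset.Ico (ν k) (ν (k + 1))) {D : ℕ → ℕ →₀ ℝ}
    (hD : ∀ m, ∀ i ∈ (D m).support, ∀ j ∈ (D (m + 1)).support, i < j)
    (hne : ∀ m, ((D m).sum fun k a => a • f k) ≠ 0) :
    IsBlockSeq fun m => (D m).sum fun k a => a • f k := by
  refine ⟨hne, fun m l hl l' hl' => ?_⟩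
  obtain ⟨k, hk, hlk⟩ := mem_Ico_of_mem_support_finsuppSum hf hl
  obtain ⟨k', hk', hlk'⟩ := mem_Ico_of_mem_support_finsuppSum hf hl'
  have hν' := hν (show k + 1 ≤ k' from hD m k hk k' hk')
  rw [Finset.mem_Ico] at hlk hlk'
  omega

theorem SchauderBasis.abs_mul_norm_vecIn_le [NormedAddCommGroup X] [NormedSpace ℝ X]
    (b : SchauderBasis X) {K : ℝ}
    (hK : ∀ (x : X) (a c : ℕ), ‖∑ l ∈ Finset.Ico a c, b.coord l x • b.e l‖ ≤ K * ‖x‖)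
    (hν : Monotone ν) (hf : ∀ k, (f k).support ⊆ Finset.Ico (ν k) (ν (k + 1)))
    (D : ℕ →₀ ℝ) (i : ℕ) :
    |D i| * ‖vecIn b.e (f i)‖ ≤ K * ‖vecIn b.e (D.sum fun k a => a • f k)‖ := by
  have hproj : ∑ l ∈ Finset.Ico (ν i) (ν (i + 1)),
      b.coord l (vecIn b.e (D.sum fun k a => a • f k)) • b.e l = D i • vecIn b.e (f i) := by
    rw [vecIn_eq_sum_of_support_subset _ (hf i), Finset.smul_sum]
    refine Finset.sum_congr rfl fun l hl => ?_
    rw [b.coord_vecIn, finsuppSum_smul_apply_of_mem_Ico hν hf D hl, smul_smul]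
  rw [← Real.norm_eq_abs, ← norm_smul, ← hproj]
  exact hK _ _ _

end Blocks

section SpreadingModels

variable {E F G : Type*} [NormedAddCommGroup E] [NormedSpace ℝ E]
  [NormedAddCommGroup F] [NormedSpace ℝ F] [NormedAddCommGroup G] [NormedSpace ℝ G]
  {n : ℕ} {ε : ℝ}

namespace SpreadingModelL1

theorem mono {x : ℕ → E} {c : ℝ} (h : SpreadingModelL1 x ε n) (hc : c ≤ ε) :
    SpreadingModelL1 x c n := fun F hF a =>
  (mul_le_mul_of_nonneg_right hc (Finset.sum_nonneg fun i _ => abs_nonneg (a i))).trans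
    (h F hF a)

theorem of_norm_sub_le {x y : ℕ → E} {η : ℝ} (h : SpreadingModelL1 x ε n)
    (hxy : ∀ k, ‖x k - y k‖ ≤ η) : SpreadingModelL1 y (ε - η) n := by
  intro F hF a
  have hdiff : ‖∑ i ∈ F, a i • x i - ∑ i ∈ F, a i • y i‖ ≤ η * ∑ i ∈ F, |a i| := by
    rw [← Finset.sum_sub_distrib, Finset.mul_sum]
    refine (norm_sum_le _ _).trans (Finset.sum_le_sum fun i _ => ?_)
    rw [← smul_sub, norm_smul, Real.norm_eq_abs, mul_comm η]
    exact mul_le_mul_of_nonneg_left (hxy i) (abs_nonneg _)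
  linarith [h F hF a, norm_sub_norm_le (∑ i ∈ F, a i • x i) (∑ i ∈ F, a i • y i)]

theorem smul {x : ℕ → E} {t : ℕ → ℝ} {c : ℝ} (h : SpreadingModelL1 x ε n) (hε : 0 ≤ ε)
    (ht : ∀ k, c ≤ |t k|) : SpreadingModelL1 (fun k => t k • x k) (c * ε) n := by
  intro F hF a
  have hsum : c * ∑ i ∈ F, |a i| ≤ ∑ i ∈ F, |a i * t i| := by
    rw [Finset.mul_sum]
    refine Finset.sum_le_sum fun i _ => ?_
    rw [abs_mul, mul_comm c]
    exact mul_le_mul_of_nonneg_left (ht i) (abs_nonneg _)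
  calc c * ε * ∑ i ∈ F, |a i| = ε * (c * ∑ i ∈ F, |a i|) := by ring
    _ ≤ ε * ∑ i ∈ F, |a i * t i| := mul_le_mul_of_nonneg_left hsum hε
    _ ≤ ‖∑ i ∈ F, (a i * t i) • x i‖ := h F hF _
    _ = ‖∑ i ∈ F, a i • t i • x i‖ := by simp only [mul_smul]

theorem of_comp {x : ℕ → E} (f : E →ₗ[ℝ] F) (g : E →ₗ[ℝ] G) {c : ℝ} (hc : 0 ≤ c)
    (hfg : ∀ u, c * ‖g u‖ ≤ ‖f u‖) (h : SpreadingModelL1 (fun k => g (x k)) ε n) :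
    SpreadingModelL1 (fun k => f (x k)) (c * ε) n := by
  intro F hF a
  calc c * ε * ∑ i ∈ F, |a i| = c * (ε * ∑ i ∈ F, |a i|) := by ring
    _ ≤ c * ‖g (∑ i ∈ F, a i • x i)‖ := by
        simp only [map_sum, map_smul]
        exact mul_le_mul_of_nonneg_left (h F hF a) hc
    _ ≤ ‖f (∑ i ∈ F, a i • x i)‖ := hfg _
    _ = ‖∑ i ∈ F, a i • f (x i)‖ := by simp only [map_sum, map_smul]

end SpreadingModelL1

theorem AsymptoticL1.spreadingModelL1_of_le_norm {b : SchauderBasis E} (hb : AsymptoticL1 b ε n)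
    (hε : 0 ≤ ε) {w : ℕ → ℕ →₀ ℝ} (hw : IsBlockSeq w) {c : ℝ} (hc : 0 < c)
    (hcw : ∀ k, c ≤ ‖vecIn b.e (w k)‖) :
    SpreadingModelL1 (fun k => vecIn b.e (w k)) (c * ε) n := by
  have hpos (k : ℕ) : 0 < ‖vecIn b.e (w k)‖ := hc.trans_le (hcw k)
  set w' : ℕ → ℕ →₀ ℝ := fun k => ‖vecIn b.e (w k)‖⁻¹ • w k
  have hvec (k : ℕ) : vecIn b.e (w' k) = ‖vecIn b.e (w k)‖⁻¹ • vecIn b.e (w k) :=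
    vecIn_smul _ _ _
  have hw' : IsBlockSeq w' := by
    refine ⟨fun k => smul_ne_zero (inv_ne_zero (hpos k).ne') (hw.1 k), fun k => ?_⟩
    simp only [w', Finsupp.support_smul_eq (inv_ne_zero (hpos _).ne')]
    exact hw.2 k
  have hnorm (k : ℕ) : ‖vecIn b.e (w' k)‖ = 1 := by
    rw [hvec, norm_smul, norm_inv, norm_norm, inv_mul_cancel₀ (hpos k).ne']
  have h := (hb w' hw' hnorm).smul (t := fun k => ‖vecIn b.e (w k)‖) hε
    fun k => (hcw k).trans (le_abs_self _)
  convert h using 2 with k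
  rw [hvec, smul_smul, mul_inv_cancel₀ (hpos k).ne', one_smul]

theorem norm_finsuppSum_smul_sub_le (D : ℕ →₀ ℝ) {y z : ℕ → E} {K η : ℝ}
    (hD : ∀ i, |D i| ≤ K) (hyz : ∀ i, ‖y i - z i‖ ≤ η / 2 / 2 ^ i) :
    ‖(D.sum fun i a => a • y i) - D.sum fun i a => a • z i‖ ≤ K * η := by
  have hK : 0 ≤ K := (abs_nonneg _).trans (hD 0)
  have hgeom : ∑ i ∈ D.support, η / 2 / 2 ^ i ≤ η := by
    have hη : 0 ≤ η := by linarith [norm_nonneg (y 0 - z 0), hyz 0]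
    calc ∑ i ∈ D.support, η / 2 / 2 ^ i ≤ ∑' i, η / 2 / 2 ^ i :=
          (summable_geometric_two' η).sum_le_tsum _ fun i _ => by positivity
      _ = η := tsum_geometric_two' η
  rw [Finsupp.sum, Finsupp.sum, ← Finset.sum_sub_distrib]
  calc ‖∑ i ∈ D.support, (D i • y i - D i • z i)‖
      ≤ ∑ i ∈ D.support, K * (η / 2 / 2 ^ i) := by
        refine (norm_sum_le _ _).trans (Finset.sum_le_sum fun i _ => ?_)
        rw [← smul_sub, norm_smul, Real.norm_eq_abs]
        exact mul_le_mul (hD i) (hyz i) (norm_nonneg _) hK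
    _ ≤ K * η := by rw [← Finset.mul_sum]; exact mul_le_mul_of_nonneg_left hgeom hK

end SpreadingModels

section Transfer

variable {X₁ X₂ : Type*} [NormedAddCommGroup X₁] [NormedSpace ℝ X₁]
  [NormedAddCommGroup X₂] [NormedSpace ℝ X₂] {U : Submodule ℝ X₁} (T : U →ₗ[ℝ] X₂)

theorem SpreadingModelL1.of_near_image {n : ℕ} {ε B η : ℝ} (hB : 0 < B)
    (hT : ∀ u, ‖T u‖ ≤ B * ‖u‖) {y : ℕ → X₁} {ξ : ℕ → U} {z : ℕ → X₂}
    (hy : ∀ m, ‖y m - ξ m‖ ≤ η) (hz : ∀ m, ‖z m - T (ξ m)‖ ≤ η) (h : SpreadingModelL1 z ε n) :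
    SpreadingModelL1 y (B⁻¹ * (ε - η) - η) n := by
  have hξ := (h.of_norm_sub_le hz).of_comp U.subtype T (inv_nonneg.mpr hB.le)
    fun u => (inv_mul_le_iff₀ hB).mpr (hT u)
  exact hξ.of_norm_sub_le fun m => by rw [norm_sub_rev]; exact hy m

theorem inv_two_mul_le_norm_of_near_image {A η : ℝ} (hA : 1 ≤ A)
    (hT : ∀ u, ‖u‖ ≤ A * ‖T u‖) (hη : η ≤ (4 * A)⁻¹) {y : X₁} (hy1 : ‖y‖ = 1) {ξ : U} {z : X₂}
    (hy : ‖y - ξ‖ ≤ η) (hz : ‖z - T ξ‖ ≤ η) : (2 * A)⁻¹ ≤ ‖z‖ := by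
  have hAη : A * η ≤ 4⁻¹ :=
    (mul_le_mul_of_nonneg_left hη (by linarith)).trans_eq (by field_simp)
  have hξ : 1 - η ≤ ‖ξ‖ := by
    linarith [norm_sub_norm_le y (ξ : X₁), Submodule.coe_norm ξ]
  have hTξ : ‖T ξ‖ - η ≤ ‖z‖ := by
    linarith [norm_sub_norm_le (T ξ) z, norm_sub_rev z (T ξ)]
  have hη4 : η ≤ 4⁻¹ := by nlinarith [(norm_nonneg _).trans hy]
  have hATξ := mul_le_mul_of_nonneg_left hTξ (by linarith : 0 ≤ A)
  rw [inv_le_iff_one_le_mul₀ (by positivity)]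
  linarith [hT ξ]

end Transfer

theorem exists_ne_zero_forall_eq_zero {E : Type*} [AddCommGroup E] [Module ℝ E]
    (hE : ¬ FiniteDimensional ℝ E) {ι : Type*} [Finite ι] (φ : ι → E →ₗ[ℝ] ℝ) :
    ∃ x ≠ 0, ∀ i, φ i x = 0 := by
  have hker : LinearMap.ker (LinearMap.pi φ) ≠ ⊥ := fun h =>
    hE (FiniteDimensional.of_injective _ (LinearMap.ker_eq_bot.mp h))
  obtain ⟨x, hx, hx0⟩ := (Submodule.ne_bot_iff _).mp hker
  exact ⟨x, hx0, fun i => congrFun (LinearMap.mem_ker.mp hx) i⟩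

theorem norm_inv_norm_smul_sub_le {E : Type*} [NormedAddCommGroup E] [NormedSpace ℝ E]
    {y z : E} (hy : ‖y‖ = 1) (hz : z ≠ 0) : ‖‖z‖⁻¹ • z - y‖ ≤ 2 * ‖z - y‖ := by
  have hscale : ‖‖z‖⁻¹ • z - z‖ = |‖y‖ - ‖z‖| := by
    rw [show ‖z‖⁻¹ • z - z = (‖z‖⁻¹ - 1) • z by rw [sub_smul, one_smul], norm_smul,
      Real.norm_eq_abs, show |‖z‖⁻¹ - 1| * ‖z‖ = |(‖z‖⁻¹ - 1) * ‖z‖| by rw [abs_mul, abs_norm],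
      sub_mul, inv_mul_cancel₀ (norm_ne_zero_iff.mpr hz), one_mul, hy, abs_sub_comm]
  calc ‖‖z‖⁻¹ • z - y‖ ≤ ‖‖z‖⁻¹ • z - z‖ + ‖z - y‖ := norm_sub_le_norm_sub_add_norm_sub _ _ _
    _ ≤ 2 * ‖z - y‖ := by
        rw [hscale, norm_sub_rev z]; linarith [abs_norm_sub_norm_le y z]

theorem SchauderBasis.exists_block_near [NormedAddCommGroup X] [NormedSpace ℝ X]
    (b : SchauderBasis X) {y : X} {n : ℕ} (hy : ∀ i < n, b.coord i y = 0) {η : ℝ} (hη : 0 < η) :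
    ∃ (h : ℕ →₀ ℝ) (m : ℕ), n < m ∧ h.support ⊆ Finset.Ico n m ∧ ‖vecIn b.e h - y‖ ≤ η := by
  obtain ⟨N, hN⟩ := Metric.tendsto_atTop.mp (b.expand y) η hη
  set m := max N (n + 1)
  refine ⟨∑ i ∈ Finset.Ico n m, Finsupp.single i (b.coord i y), m, by omega, ?_, ?_⟩
  · intro l hl
    obtain ⟨i, hi, hli⟩ := Finset.mem_biUnion.mp (Finsupp.support_finsetSum hl)
    rwa [Finset.mem_singleton.mp (Finsupp.support_single_subset hli)]
  · have hsum : vecIn b.e (∑ i ∈ Finset.Ico n m, Finsupp.single i (b.coord i y))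
        = ∑ i ∈ Finset.range m, b.coord i y • b.e i := by
      rw [vecIn_eq_linearCombination, map_sum, ← Finset.sum_range_add_sum_Ico _ (by omega : n ≤ m),
        Finset.sum_eq_zero (s := Finset.range n) fun i hi => by
          rw [hy i (Finset.mem_range.mp hi), zero_smul], zero_add]
      exact Finset.sum_congr rfl fun i _ => Finsupp.linearCombination_single ℝ _ i
    rw [hsum, ← dist_eq_norm]
    exact (hN m (le_max_left _ _)).le

section GlidingHump

variable {X₁ X₂ : Type*} [NormedAddCommGroup X₁] [NormedSpace ℝ X₁]
  [NormedAddCommGroup X₂] [NormedSpace ℝ X₂]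
  (b₁ : SchauderBasis X₁) (b₂ : SchauderBasis X₂) {U : Submodule ℝ X₁} (T : U →ₗ[ℝ] X₂)

/-- `x` is taken in the common kernel of the first coordinate functionals of `x` and of `T x`,
which is nontrivial because `U` is infinite-dimensional. -/
theorem exists_block_pair_near (hU : ¬ FiniteDimensional ℝ U) {η : ℝ} (hη : 0 < η)
    (n₁ n₂ : ℕ) :
    ∃ (x : U) (f g : ℕ →₀ ℝ) (m₁ m₂ : ℕ), n₁ < m₁ ∧ n₂ < m₂ ∧
      f.support ⊆ Finset.Ico n₁ m₁ ∧ g.support ⊆ Finset.Ico n₂ m₂ ∧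
      ‖vecIn b₁.e f‖ = 1 ∧ ‖vecIn b₁.e f - x‖ ≤ η ∧ ‖vecIn b₂.e g - T x‖ ≤ η := by
  obtain ⟨x₀, hx₀, hvan⟩ := exists_ne_zero_forall_eq_zero hU
    (Sum.elim (fun i : Fin n₁ => b₁.coord i ∘ₗ U.subtype) fun i : Fin n₂ => b₂.coord i ∘ₗ T)
  have hvan₁ (i : ℕ) (hi : i < n₁) : b₁.coord i (x₀ : X₁) = 0 := hvan (Sum.inl ⟨i, hi⟩)
  have hvan₂ (i : ℕ) (hi : i < n₂) : b₂.coord i (T x₀) = 0 := hvan (Sum.inr ⟨i, hi⟩)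
  set x : U := ‖x₀‖⁻¹ • x₀
  have hx : ‖(x : X₁)‖ = 1 := by
    rw [← Submodule.coe_norm, norm_smul, norm_inv, norm_norm,
      inv_mul_cancel₀ (norm_ne_zero_iff.mpr hx₀)]
  have hη' : 0 < min (η / 2) 2⁻¹ := lt_min (half_pos hη) (by norm_num)
  obtain ⟨h, m₁, hm₁, hh, hhx⟩ := b₁.exists_block_near (y := (x : X₁)) (n := n₁)
    (fun i hi => by simp [x, hvan₁ i hi]) hη'
  obtain ⟨g, m₂, hm₂, hg, hgx⟩ := b₂.exists_block_near (y := T x) (n := n₂)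
    (fun i hi => by simp [x, hvan₂ i hi]) hη
  have hh0 : vecIn b₁.e h ≠ 0 := fun h0 => by
    rw [h0, zero_sub, norm_neg, hx] at hhx
    have := min_le_right (η / 2) 2⁻¹
    linarith
  refine ⟨x, ‖vecIn b₁.e h‖⁻¹ • h, g, m₁, m₂, hm₁, hm₂,
    Finsupp.support_smul.trans hh, hg, ?_, ?_, hgx⟩
  · rw [vecIn_smul, norm_smul, norm_inv, norm_norm, inv_mul_cancel₀ (norm_ne_zero_iff.mpr hh0)]
  · rw [vecIn_smul]
    have := min_le_left (η / 2) 2⁻¹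
    linarith [norm_inv_norm_smul_sub_le hx hh0]

structure GlidingHump (ε : ℕ → ℝ) where
  x : ℕ → U
  f : ℕ → ℕ →₀ ℝ
  g : ℕ → ℕ →₀ ℝ
  ν₁ : ℕ → ℕ
  ν₂ : ℕ → ℕ
  monotone_ν₁ : Monotone ν₁
  monotone_ν₂ : Monotone ν₂
  support_f : ∀ k, (f k).support ⊆ Finset.Ico (ν₁ k) (ν₁ (k + 1))
  support_g : ∀ k, (g k).support ⊆ Finset.Ico (ν₂ k) (ν₂ (k + 1))
  norm_f : ∀ k, ‖vecIn b₁.e (f k)‖ = 1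
  norm_f_sub_le : ∀ k, ‖vecIn b₁.e (f k) - x k‖ ≤ ε k
  norm_g_sub_le : ∀ k, ‖vecIn b₂.e (g k) - T (x k)‖ ≤ ε k

theorem GlidingHump.nonempty (hU : ¬ FiniteDimensional ℝ U) {ε : ℕ → ℝ} (hε : ∀ k, 0 < ε k) :
    Nonempty (GlidingHump b₁ b₂ T ε) := by
  choose x f g m₁ m₂ hm₁ hm₂ hf hg hfn hfx hgx using
    fun k (p : ℕ × ℕ) => exists_block_pair_near b₁ b₂ T hU (hε k) p.1 p.2
  let ν : ℕ → ℕ × ℕ := fun k => Nat.rec (0, 0) (fun k p => (m₁ k p, m₂ k p)) k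
  exact ⟨{
    x := fun k => x k (ν k)
    f := fun k => f k (ν k)
    g := fun k => g k (ν k)
    ν₁ := fun k => (ν k).1
    ν₂ := fun k => (ν k).2
    monotone_ν₁ := monotone_nat_of_le_succ fun k => (hm₁ k (ν k)).le
    monotone_ν₂ := monotone_nat_of_le_succ fun k => (hm₂ k (ν k)).le
    support_f := fun k => hf k (ν k)
    support_g := fun k => hg k (ν k)
    norm_f := fun k => hfn k (ν k)
    norm_f_sub_le := fun k => hfx k (ν k)
    norm_g_sub_le := fun k => hgx k (ν k) }⟩

variable {b₁ b₂ T}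

theorem GlidingHump.isBlockSeq_f {ε : ℕ → ℝ} (H : GlidingHump b₁ b₂ T ε) : IsBlockSeq H.f :=
  isBlockSeq_of_support_subset_Ico H.support_f fun k h0 => by
    simpa [h0, vecIn] using H.norm_f k

/-- `v m = ∑ D m i • f i` is close to `ξ m = ∑ D m i • x i`, whose image under `T` is close to the
block `w m = ∑ D m i • g i` of `b₂`; the `ℓ¹` estimates of `(w m)` are pulled back through `T`. -/
theorem GlidingHump.spreadingModelL1_of_isBlockSeqOf {η K A B δ : ℝ} {n : ℕ} (hK0 : 0 < K)
    (H : GlidingHump b₁ b₂ T fun k => η / K / 2 / 2 ^ k)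
    (hK : ∀ (x : X₁) (a c : ℕ), ‖∑ l ∈ Finset.Ico a c, b₁.coord l x • b₁.e l‖ ≤ K * ‖x‖)
    (hA : 1 ≤ A) (hB : 0 < B) (hlow : ∀ u, ‖u‖ ≤ A * ‖T u‖) (hup : ∀ u, ‖T u‖ ≤ B * ‖u‖)
    (hb₂ : AsymptoticL1 b₂ δ n) (hδ : 0 < δ) (hη₁ : η ≤ (4 * A)⁻¹)
    (hη₂ : (B + 1) * η ≤ δ / (4 * A)) {v : ℕ → ℕ →₀ ℝ} (hv : IsBlockSeqOf v H.f)
    (hv1 : ∀ m, ‖vecIn b₁.e (v m)‖ = 1) :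
    SpreadingModelL1 (fun m => vecIn b₁.e (v m)) (δ / (4 * A * B)) n := by
  obtain ⟨-, D, hD, hvD⟩ := hv
  obtain rfl : v = fun m => (D m).sum fun i a => a • H.f i := funext hvD
  set ξ : ℕ → U := fun m => (D m).sum fun i a => a • H.x i
  set w : ℕ → ℕ →₀ ℝ := fun m => (D m).sum fun i a => a • H.g i
  have hKη : K * (η / K) = η := mul_div_cancel₀ η hK0.ne'
  have hcoef (m i : ℕ) : |D m i| ≤ K := by
    simpa [H.norm_f, hv1] using b₁.abs_mul_norm_vecIn_le hK H.monotone_ν₁ H.support_f (D m) i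
  have hvξ (m : ℕ) : ‖vecIn b₁.e ((D m).sum fun i a => a • H.f i) - ξ m‖ ≤ η := by
    rw [vecIn_finsuppSum, show ((ξ m : U) : X₁) = (D m).sum fun i a => a • (H.x i : X₁) by
      simp only [ξ, ← U.subtype_apply, map_finsuppSum, map_smul]]
    exact (norm_finsuppSum_smul_sub_le _ (hcoef m) H.norm_f_sub_le).trans_eq hKη
  have hwξ (m : ℕ) : ‖vecIn b₂.e (w m) - T (ξ m)‖ ≤ η := by
    simp only [w, ξ, vecIn_finsuppSum, map_finsuppSum, map_smul]
    exact (norm_finsuppSum_smul_sub_le _ (hcoef m) H.norm_g_sub_le).trans_eq hKη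
  have hw1 (m : ℕ) : (2 * A)⁻¹ ≤ ‖vecIn b₂.e (w m)‖ :=
    inv_two_mul_le_norm_of_near_image T hA hlow hη₁ (hv1 m) (hvξ m) (hwξ m)
  have hw : IsBlockSeq w := isBlockSeq_finsuppSum H.monotone_ν₂ H.support_g hD.2 fun m h0 => by
    have := hw1 m
    simp only [w] at this
    rw [h0, vecIn, Finsupp.sum_zero_index, norm_zero] at this
    exact absurd this (not_le.mpr (by positivity))
  have hz := hb₂.spreadingModelL1_of_le_norm hδ.le hw (by positivity) hw1
  refine (hz.of_near_image T hB hup hvξ hwξ).mono ?_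
  have hrhs : B⁻¹ * ((2 * A)⁻¹ * δ - η) - η = δ / (2 * A * B) - (B + 1) * η / B := by
    field_simp
    ring
  have hdiv : (B + 1) * η / B ≤ δ / (4 * A) / B := div_le_div_of_nonneg_right hη₂ hB.le
  have hsplit : δ / (2 * A * B) - δ / (4 * A) / B = δ / (4 * A * B) := by
    field_simp
    ring
  linarith

end GlidingHump

theorem exists_eq_and_le_mul {N₁ N₂ : ℕ → ℕ} {δ : ℕ → ℝ} (hδ : Antitone δ)
    (hpos : ∀ i, 0 < δ i) (hratio : Tendsto (fun i => δ (i + 1) / δ i) atTop (𝓝 0))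
    (hmatch : ∀ i₀ : ℕ, ∃ i j : ℕ, i₀ < j ∧ j < i ∧ N₁ i = N₂ j) {r : ℝ} (hr : 0 < r) :
    ∃ i j, N₁ i = N₂ j ∧ δ i ≤ r * δ j := by
  obtain ⟨i₀, hi₀⟩ := eventually_atTop.mp (hratio.eventually_lt_const hr)
  obtain ⟨i, j, hi₀j, hji, hN⟩ := hmatch i₀
  refine ⟨i, j, hN, (hδ (show j + 1 ≤ i by omega)).trans ?_⟩
  exact ((div_lt_iff₀ (hpos j)).mp (hi₀ j hi₀j.le)).le

theorem exists_norm_le_mul_norm_apply {E F : Type*} [NormedAddCommGroup E] [NormedSpace ℝ E]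
    [NormedAddCommGroup F] [NormedSpace ℝ F] (T : E ≃L[ℝ] F) :
    ∃ A B : ℝ, 1 ≤ A ∧ 0 < B ∧ (∀ u, ‖u‖ ≤ A * ‖T u‖) ∧ ∀ u, ‖T u‖ ≤ B * ‖u‖ := by
  refine ⟨‖(T.symm : F →L[ℝ] E)‖ + 1, ‖(T : E →L[ℝ] F)‖ + 1, by simp, by positivity,
    fun u => ?_, fun u => ?_⟩
  · calc ‖u‖ = ‖(T.symm : F →L[ℝ] E) (T u)‖ := by simp
      _ ≤ ‖(T.symm : F →L[ℝ] E)‖ * ‖T u‖ := ContinuousLinearMap.le_opNorm _ _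
      _ ≤ (‖(T.symm : F →L[ℝ] E)‖ + 1) * ‖T u‖ := by gcongr; linarith
  · calc ‖T u‖ = ‖(T : E →L[ℝ] F) u‖ := rfl
      _ ≤ ‖(T : E →L[ℝ] F)‖ * ‖u‖ := ContinuousLinearMap.le_opNorm _ _
      _ ≤ (‖(T : E →L[ℝ] F)‖ + 1) * ‖u‖ := by gcongr; linarith

theorem statement3_general (X₁ X₂ : Type*)
    [NormedAddCommGroup X₁] [NormedSpace ℝ X₁] [CompleteSpace X₁]
    [NormedAddCommGroup X₂] [NormedSpace ℝ X₂]
    (b₁ : SchauderBasis X₁) (b₂ : SchauderBasis X₂)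
    (d₁ d₂ : ℝ) (N₁ P₁ N₂ P₂ : ℕ → ℕ) (δ : ℕ → ℝ)
    (hdp₁ : DistortionProperty b₁ d₁ N₁ P₁ δ)
    (hdp₂ : DistortionProperty b₂ d₂ N₂ P₂ δ)
    (hratio : Tendsto (fun i => δ (i + 1) / δ i) atTop (𝓝 (0 : ℝ)))
    (hmatch : ∀ i₀ : ℕ, ∃ i j : ℕ, i₀ < j ∧ j < i ∧ N₁ i = N₂ j) :
    TotallyIncomparable X₁ X₂ := by
  intro U V hU _
  refine ⟨fun T => ?_⟩
  obtain ⟨A, B, hA, hB, hlow, hup⟩ := exists_norm_le_mul_norm_apply T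
  obtain ⟨K, hK, hKbound⟩ := b₁.exists_norm_sum_Ico_le
  have hd₁ : 0 < d₁ := one_pos.trans hdp₁.one_lt_d
  obtain ⟨i, j, hN, hδij⟩ := exists_eq_and_le_mul (antitone_nat_of_succ_le hdp₁.δ_anti)
    hdp₁.δ_pos hratio hmatch (r := (4 * A * B * d₁)⁻¹) (by positivity)
  have hδj := hdp₁.δ_pos j
  obtain ⟨η, hη, hη₁, hη₂⟩ : ∃ η : ℝ, 0 < η ∧ η ≤ (4 * A)⁻¹ ∧ (B + 1) * η ≤ δ j / (4 * A) :=
    ⟨min (4 * A)⁻¹ (δ j / (4 * A * (B + 1))), by positivity, min_le_left _ _,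
      (le_div_iff₀' (by positivity)).mp ((min_le_right _ _).trans_eq (by field_simp))⟩
  obtain ⟨H⟩ := GlidingHump.nonempty b₁ b₂ (V.subtype ∘ₗ (T : U →ₗ[ℝ] V)) hU.2
    (ε := fun k => η / K / 2 / 2 ^ k) fun k => by positivity
  have hτ : (N₁ i : ℕ∞) ≤ tau b₁.e H.f (d₁ * δ i) := by
    refine le_sSup ⟨N₁ i, rfl, fun v hv hv1 => ⟨id, strictMono_id, ?_⟩⟩
    rw [hN]
    refine (H.spreadingModelL1_of_isBlockSeqOf hK hKbound hA hB hlow hup (hdp₂.asymptotic j)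
      hδj hη₁ hη₂ hv hv1).mono ?_
    calc d₁ * δ i ≤ d₁ * ((4 * A * B * d₁)⁻¹ * δ j) := by gcongr
      _ = δ j / (4 * A * B) := by field_simp
  have hNP : N₁ i < P₁ i := by exact_mod_cast hτ.trans_lt (hdp₁.tau_lt i H.f H.isBlockSeq_f)
  linarith [hdp₁.P_lt_N i]

theorem statement3 (X₁ X₂ : Type*)
    [NormedAddCommGroup X₁] [NormedSpace ℝ X₁] [CompleteSpace X₁]
    [NormedAddCommGroup X₂] [NormedSpace ℝ X₂] [CompleteSpace X₂]
    (b₁ : SchauderBasis X₁) (b₂ : SchauderBasis X₂)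
    (hs₁ : Shrinking b₁) (hs₂ : Shrinking b₂)
    (d₁ d₂ : ℝ) (N₁ P₁ N₂ P₂ : ℕ → ℕ) (δ : ℕ → ℝ)
    (hdp₁ : DistortionProperty b₁ d₁ N₁ P₁ δ)
    (hdp₂ : DistortionProperty b₂ d₂ N₂ P₂ δ)
    (hratio : Tendsto (fun i => δ (i + 1) / δ i) atTop (𝓝 (0 : ℝ)))
    (hmatch : ∀ i₀ : ℕ, ∃ i j : ℕ, i₀ < j ∧ j < i ∧ N₁ i = N₂ j) :
    TotallyIncomparable X₁ X₂ :=
  statement3_general X₁ X₂ b₁ b₂ d₁ d₂ N₁ P₁ N₂ P₂ δ hdp₁ hdp₂ hratio hmatch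

end Gasparis
end
end

section
/- Fix M = (m_i) and L = (l_i) as in the definition of M-good. Then: (a) the set 𝓓 = {N ∈ [ℕ] : N is M-good} is closed in the topology of pointwise convergence on [ℕ]; (b) for every R ∈ [ℕ] there exists N ∈ [R] which is M-good; and (c) there exists N_0 ∈ [ℕ] such that every infinite subset of N_0 is M-good. -/
open Filter Topology

open scoped Classical

noncomputable section

lemma Nat.nth_eq_nth_of_agree {p q : ℕ → Prop} (hp : (Set.ofPred p).Infinite) {b i : ℕ}
    (hpq : ∀ x ≤ b, (p x ↔ q x)) (hi : Nat.nth p i ≤ b) : Nat.nth p i = Nat.nth q i := by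
  have hcount : Nat.count q (Nat.nth p i) = i := by
    refine (le_antisymm ?_ ?_).trans (Nat.count_nth_of_infinite hp i)
    · exact Nat.count_mono_left fun k hk => (hpq k (by omega)).2
    · exact Nat.count_mono_left fun k hk => (hpq k (by omega)).1
  have hq := Nat.nth_count ((hpq _ hi).1 (Nat.nth_mem_of_infinite hp i))
  rw [hcount] at hq
  exact hq.symm

lemma Set.Infinite.exists_strictMono_forall_lt {R : Set ℕ} (hR : R.Infinite) (b : ℕ)
    (B : ℕ → ℕ → ℕ) :
    ∃ n : ℕ → ℕ, StrictMono n ∧ (∀ k, n k ∈ R) ∧ b < n 0 ∧ ∀ k, B k (n k) < n (k + 1) := by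
  choose g hgR hg using hR.exists_gt
  let n : ℕ → ℕ := fun k => Nat.rec (g b) (fun k x => g (max x (B k x))) k
  have hsucc (k : ℕ) : max (n k) (B k (n k)) < n (k + 1) := hg _
  refine ⟨n, strictMono_nat_of_lt_succ fun k => (le_max_left _ _).trans_lt (hsucc k),
    fun k => ?_, hg b, fun k => (le_max_right _ _).trans_lt (hsucc k)⟩
  cases k <;> exact hgR _

lemma Finset.sum_lt_of_prod_pow_lt {m ρ : ℕ → ℕ} (hm : ∀ i, 2 ≤ m i) {s : Finset ℕ} {C : ℕ}
    (hρ : ∏ i ∈ s, m i ^ ρ i < C) : ∑ i ∈ s, ρ i < C :=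
  calc ∑ i ∈ s, ρ i < 2 ^ ∑ i ∈ s, ρ i := Nat.lt_two_pow_self
    _ = ∏ i ∈ s, 2 ^ ρ i := (Finset.prod_pow_eq_pow_sum s ρ 2).symm
    _ ≤ ∏ i ∈ s, m i ^ ρ i := Finset.prod_le_prod' fun i _ => Nat.pow_le_pow_left (hm i) _
    _ < C := hρ

namespace Gasparis

lemma eventually_enumOf_eq {S₀ : ℕ → Bool} (hS₀ : {i | S₀ i = true}.Infinite) (j : ℕ) :
    ∀ᶠ T in 𝓝 S₀, ∀ i ≤ j, enumOf T i = enumOf S₀ i := by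
  have hagree : ∀ᶠ T in 𝓝 S₀, ∀ x ∈ Set.Iic (enumOf S₀ j), T x = S₀ x :=
    (Set.finite_Iic _).eventually_all.2 fun x _ =>
      tendsto_pure.1 (nhds_discrete Bool ▸ (continuous_apply x).tendsto S₀)
  filter_upwards [hagree] with T hT i hi
  refine (Nat.nth_eq_nth_of_agree hS₀ (fun x hx => ?_) (Nat.nth_monotone hS₀ hi)).symm
  rw [hT x hx]

lemma fN_congr {m n n' : ℕ → ℕ} {j : ℕ} (h : ∀ i < j, n i = n' i) :
    fN m n j = fN m n' j := by
  cases j with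
  | zero => rfl
  | succ j =>
    have hsum (ρ : ℕ → ℕ) :
        ∑ i ∈ Finset.range (j + 1), ρ i * n i = ∑ i ∈ Finset.range (j + 1), ρ i * n' i :=
      Finset.sum_congr rfl fun i hi => by rw [h i (Finset.mem_range.mp hi)]
    simp only [fN, hsum]

lemma mGoodB_iff {m l : ℕ → ℕ} {S : ℕ → Bool} (hS : {i | S i = true}.Infinite) :
    MGoodB m l S ↔ ∀ j, l j * (fN m (enumOf S) j + 1) < enumOf S j :=
  and_iff_right (Nat.nth_strictMono hS)

lemma isClosed_setOf_mGoodB (m l : ℕ → ℕ) :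
    IsClosed {S : {T : ℕ → Bool // {i | T i = true}.Infinite} | MGoodB m l S.1} := by
  rw [← isOpen_compl_iff, isOpen_iff_eventually]
  intro S₀ hS₀
  obtain ⟨j, hj⟩ : ∃ j, ¬ l j * (fN m (enumOf S₀.1) j + 1) < enumOf S₀.1 j := by
    simpa [mGoodB_iff S₀.2] using hS₀
  filter_upwards [continuous_subtype_val.continuousAt.eventually (eventually_enumOf_eq S₀.2 j)]
    with T hT hgood
  have hj' := (mGoodB_iff T.2).1 hgood j
  rw [hT j le_rfl, fN_congr fun i hi => hT i hi.le] at hj'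
  exact hj hj'

lemma MLParams.two_le_m {m l : ℕ → ℕ} (hml : MLParams m l) (i : ℕ) : 2 ≤ m i := by
  have := hml.m_mono.monotone (Nat.zero_le i)
  have := hml.m_six
  omega

lemma fN_succ_le {m n : ℕ → ℕ} (hm : ∀ i, 2 ≤ m i) (hn : Monotone n) (j : ℕ) :
    fN m n (j + 1) ≤ m (j + 1) ^ 3 * n j := by
  refine csSup_le ⟨0, fun _ => 0, ?_, by simp⟩ ?_
  · simpa using Nat.one_lt_pow three_ne_zero (hm (j + 1))
  · rintro s ⟨ρ, hρ, rfl⟩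
    calc ∑ i ∈ Finset.range (j + 1), ρ i * n i
        ≤ ∑ i ∈ Finset.range (j + 1), ρ i * n j :=
          Finset.sum_le_sum fun i hi =>
            Nat.mul_le_mul_left _ (hn (Nat.le_of_lt_succ (Finset.mem_range.mp hi)))
      _ = (∑ i ∈ Finset.range (j + 1), ρ i) * n j := (Finset.sum_mul ..).symm
      _ ≤ m (j + 1) ^ 3 * n j := Nat.mul_le_mul_right _ (Finset.sum_lt_of_prod_pow_lt hm hρ).le

/-- The growth condition under which every subsequence of `n` is `M`-good. -/
def IsMLacunary (m l n : ℕ → ℕ) : Prop :=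
  StrictMono n ∧ 2 * l 0 < n 0 ∧ ∀ k, l (k + 1) * (m (k + 1) ^ 3 * n k + 1) < n (k + 1)

lemma exists_isMLacunary (m l : ℕ → ℕ) {R : Set ℕ} (hR : R.Infinite) :
    ∃ n : ℕ → ℕ, IsMLacunary m l n ∧ ∀ k, n k ∈ R := by
  obtain ⟨n, hn, hnR, h0, hsucc⟩ :=
    hR.exists_strictMono_forall_lt (2 * l 0) fun k x => l (k + 1) * (m (k + 1) ^ 3 * x + 1)
  exact ⟨n, ⟨hn, h0, hsucc⟩, hnR⟩

lemma IsMLacunary.mGoodSeq_comp {m l n φ : ℕ → ℕ} (hml : MLParams m l) (hn : IsMLacunary m l n)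
    (hφ : StrictMono φ) : MGoodSeq m l (n ∘ φ) := by
  obtain ⟨hmono, h0, hsucc⟩ := hn
  refine ⟨hmono.comp hφ, fun j => ?_⟩
  cases j with
  | zero =>
    have := h0.trans_le (hmono.monotone (Nat.zero_le (φ 0)))
    show l 0 * (1 + 1) < n (φ 0)
    omega
  | succ j =>
    have hjφ : j + 1 ≤ φ (j + 1) := hφ.le_apply
    obtain ⟨k, hk⟩ := Nat.exists_eq_add_one_of_ne_zero (by omega : φ (j + 1) ≠ 0)
    have hjk : j + 1 ≤ k + 1 := hk ▸ hjφ
    have hφj : φ j ≤ k := by have := hφ (show j < j + 1 by omega); omega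
    calc l (j + 1) * (fN m (n ∘ φ) (j + 1) + 1)
        ≤ l (j + 1) * (m (j + 1) ^ 3 * n (φ j) + 1) := by
          gcongr; exact fN_succ_le hml.two_le_m (hmono.monotone.comp hφ.monotone) j
      _ ≤ l (k + 1) * (m (k + 1) ^ 3 * n k + 1) := by
          gcongr
          · exact hml.l_mono.monotone hjk
          · exact hml.m_mono.monotone hjk
          · exact hmono.monotone hφj
      _ < (n ∘ φ) (j + 1) := hk ▸ hsucc k

lemma IsMLacunary.mGoodB {m l n : ℕ → ℕ} (hml : MLParams m l) (hn : IsMLacunary m l n)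
    {S : ℕ → Bool} (hS : {i | S i = true}.Infinite) (hSn : ∀ i, S i = true → i ∈ Set.range n) :
    MGoodB m l S := by
  choose φ hφ using fun j => hSn _ (Nat.nth_mem_of_infinite hS j)
  have hφmono : StrictMono φ := fun a c hac =>
    hn.1.lt_iff_lt.mp (by rw [hφ, hφ]; exact Nat.nth_strictMono hS hac)
  have henum : enumOf S = n ∘ φ := funext fun j => (hφ j).symm
  rw [MGoodB, henum]
  exact hn.mGoodSeq_comp hml hφmono

lemma exists_subset_forall_subset_mGoodB {m l : ℕ → ℕ} (hml : MLParams m l) {R : ℕ → Bool}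
    (hR : {i | R i = true}.Infinite) :
    ∃ N : ℕ → Bool, {i | N i = true}.Infinite ∧ (∀ i, N i = true → R i = true) ∧
      ∀ S : ℕ → Bool, {i | S i = true}.Infinite → (∀ i, S i = true → N i = true) →
        MGoodB m l S := by
  obtain ⟨n, hn, hnR⟩ := exists_isMLacunary m l hR
  have hN : {i | decide (i ∈ Set.range n) = true}.Infinite := by
    simpa only [decide_eq_true_eq, Set.ofPred_mem_eq] using
      Set.infinite_range_of_injective hn.1.injective
  refine ⟨fun i => decide (i ∈ Set.range n), hN,
    ?_, fun S hS hSN => hn.mGoodB hml hS fun i hi => by simpa using hSN i hi⟩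
  rintro _ hi
  obtain ⟨k, rfl⟩ := of_decide_eq_true hi
  exact hnR k

theorem statement14 (m l : ℕ → ℕ) (hml : MLParams m l) :
    IsClosed {S : {T : ℕ → Bool // {i | T i = true}.Infinite} | MGoodB m l S.1} ∧
    (∀ R : ℕ → Bool, {i | R i = true}.Infinite →
      ∃ S : ℕ → Bool, {i | S i = true}.Infinite ∧ (∀ i, S i = true → R i = true) ∧
        MGoodB m l S) ∧
    (∃ N₀ : ℕ → Bool, {i | N₀ i = true}.Infinite ∧
      ∀ S : ℕ → Bool, {i | S i = true}.Infinite → (∀ i, S i = true → N₀ i = true) →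
        MGoodB m l S) := by
  refine ⟨isClosed_setOf_mGoodB m l, fun R hR => ?_, ?_⟩
  · obtain ⟨N, hN, hNR, hgood⟩ := exists_subset_forall_subset_mGoodB hml hR
    exact ⟨N, hN, hNR, hgood N hN fun _ => id⟩
  · obtain ⟨N, hN, -, hgood⟩ :=
      exists_subset_forall_subset_mGoodB hml (R := fun _ => true) (by simpa using Set.infinite_univ)
    exact ⟨N, hN, hgood⟩

end Gasparis
end
end

section
/- Let N_0 be an infinite subset of ℕ. For infinite subsets N = (n_i) and R = (r_i) of N_0 (increasing enumerations), let G = {(N, R) ∈ [N_0] × [N_0] : for every i_0 ∈ ℕ there exist i > j > i_0 with n_{2i} = r_{2j}}. Then G is a dense G_δ subset of [N_0] × [N_0]. -/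
open Filter Topology

open scoped Classical

noncomputable section

namespace Gasparis

variable {X : Type*}

/-! ## STATEMENT 15 -/


/-- The set `G` of pairs `(N, R)` of infinite subsets of `N₀` such that for every `i₀`
there are `i > j > i₀` with `n_{2i} = r_{2j}`. -/
def Gset (N₀ : ℕ → Bool) : Set (SubsetsOf N₀ × SubsetsOf N₀) :=
  {p | ∀ i₀ : ℕ, ∃ i j : ℕ, i₀ < j ∧ j < i ∧
    enumOf p.1.1 (2 * i - 1) = enumOf p.2.1 (2 * j - 1)}

/-! `Gset N₀` is the intersection over `i₀` of the sets where some coincidence `n_{2i} = r_{2j}`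
with `i > j > i₀` occurs, and these are open because the `k`-th element of an infinite set only
depends on an initial segment of it. For density, a pair `(S, R)` is changed beyond a given `m` so
that from some `t` on both agree with `N₀`, while `S` has exactly two more elements below `t` than
`R`. Then every element of `N₀` beyond `t` has two more predecessors in `S` than in `R`, so it is
both `s_{c+2}` and `r_c` for some `c`; taking `c = 2j` gives `s_{2(j+1)} = r_{2j}`. -/

section Count

variable {p q : ℕ → Prop} [DecidablePred p] [DecidablePred q] {t d : ℕ}

lemma count_eq_count_add_of_forall_le_iff (hpq : ∀ i, t ≤ i → (p i ↔ q i))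
    (hd : Nat.count p t = Nat.count q t + d) {n : ℕ} (hn : t ≤ n) :
    Nat.count p n = Nat.count q n + d := by
  obtain ⟨k, rfl⟩ := Nat.exists_eq_add_of_le hn
  have hshift : Nat.count (fun i => p (t + i)) k = Nat.count (fun i => q (t + i)) k := by
    simp only [Nat.count_eq_card_filter_range]
    exact congrArg Finset.card (Finset.filter_congr fun i _ => hpq _ (Nat.le_add_right t i))
  rw [Nat.count_add, Nat.count_add, hshift, hd]
  omega

lemma nth_add_eq_nth_of_forall_le_iff (hq : {i | q i}.Infinite)
    (hpq : ∀ i, t ≤ i → (p i ↔ q i)) (hd : Nat.count p t = Nat.count q t + d) {c : ℕ}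
    (hc : Nat.count q t ≤ c) :
    Nat.nth p (c + d) = Nat.nth q c := by
  have ht : t ≤ Nat.nth q c := (Nat.count_le_iff_le_nth hq).1 hc
  calc Nat.nth p (c + d)
      = Nat.nth p (Nat.count p (Nat.nth q c)) := by
        rw [count_eq_count_add_of_forall_le_iff hpq hd ht, Nat.count_nth_of_infinite hq]
    _ = Nat.nth q c := Nat.nth_count ((hpq _ ht).2 (Nat.nth_mem_of_infinite hq c))

lemma exists_nth_two_mul_sub_one_eq (hq : {i | q i}.Infinite)
    (hpq : ∀ i, t ≤ i → (p i ↔ q i)) (hd : Nat.count p t = Nat.count q t + 2) (i₀ : ℕ) :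
    ∃ i j : ℕ, i₀ < j ∧ j < i ∧ Nat.nth p (2 * i - 1) = Nat.nth q (2 * j - 1) := by
  refine ⟨i₀ + Nat.count q t + 2, i₀ + Nat.count q t + 1, by omega, by omega, ?_⟩
  rw [show 2 * (i₀ + Nat.count q t + 2) - 1 = 2 * (i₀ + Nat.count q t + 1) - 1 + 2 by omega]
  exact nth_add_eq_nth_of_forall_le_iff hq hpq hd (by omega)

end Count

def patch (S : ℕ → Bool) (m : ℕ) (E : Finset ℕ) (t : ℕ) (T : ℕ → Bool) : ℕ → Bool :=
  fun i => if i < m then S i else if i < t then decide (i ∈ E) else T i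

section Patch

variable {S T : ℕ → Bool} {m t : ℕ} {E : Finset ℕ}

lemma patch_of_lt {i : ℕ} (hi : i < m) : patch S m E t T i = S i := if_pos hi

lemma patch_of_le (hmt : m ≤ t) {i : ℕ} (hi : t ≤ i) : patch S m E t T i = T i := by
  simp only [patch, if_neg (show ¬i < m by omega), if_neg (show ¬i < t by omega)]

lemma patch_of_le_of_lt {i : ℕ} (him : m ≤ i) (hit : i < t) :
    patch S m E t T i = decide (i ∈ E) := by
  simp only [patch, if_neg (show ¬i < m by omega), if_pos hit]

lemma count_patch (hmt : m ≤ t) (hE : ∀ i ∈ E, m ≤ i ∧ i < t) :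
    Nat.count (fun i => patch S m E t T i = true) t =
      Nat.count (fun i => S i = true) m + E.card := by
  have hsplit : (Finset.range t).filter (fun i => patch S m E t T i = true)
      = (Finset.range m).filter (fun i => S i = true) ∪ E := by
    ext i
    simp only [Finset.mem_filter, Finset.mem_union, Finset.mem_range]
    rcases lt_or_ge i m with him | him
    · have hiE : i ∉ E := fun hiE => absurd (hE i hiE).1 (by omega)
      rw [patch_of_lt him]
      exact ⟨fun h => Or.inl ⟨him, h.2⟩, fun h => ⟨by omega, h.resolve_right hiE |>.2⟩⟩
    · rcases lt_or_ge i t with hit | hit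
      · rw [patch_of_le_of_lt him hit, decide_eq_true_iff]
        exact ⟨fun h => Or.inr h.2, fun h => ⟨hit, h.resolve_left (by omega)⟩⟩
      · have hiE : i ∉ E := fun hiE => absurd (hE i hiE).2 (by omega)
        exact ⟨fun h => absurd h.1 (by omega),
          fun h => h.elim (fun h => absurd h.1 (by omega)) hiE.elim⟩
  have hdisj : Disjoint ((Finset.range m).filter (fun i => S i = true)) E :=
    Finset.disjoint_left.2 fun i hi hiE =>
      absurd (Finset.mem_range.1 (Finset.mem_filter.1 hi).1) (not_lt.2 (hE i hiE).1)
  rw [Nat.count_eq_card_filter_range, hsplit, Finset.card_union_of_disjoint hdisj,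
    Nat.count_eq_card_filter_range]

lemma infinite_patch (hT : {i | T i = true}.Infinite) (hmt : m ≤ t) :
    {i | patch S m E t T i = true}.Infinite :=
  (hT.sdiff (Set.finite_Iio t)).mono fun i hi => by
    rw [Set.mem_ofPred_eq, patch_of_le hmt (not_lt.1 hi.2)]
    exact hi.1

lemma eq_true_of_patch_eq_true (hS : ∀ i, S i = true → T i = true) (hE : ∀ i ∈ E, T i = true)
    (i : ℕ) (hi : patch S m E t T i = true) : T i = true := by
  unfold patch at hi
  split_ifs at hi
  · exact hS i hi
  · exact hE i (of_decide_eq_true hi)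
  · exact hi

end Patch

lemma tendsto_pi_of_forall_lt_eq {β : Type*} [TopologicalSpace β] {u : ℕ → ℕ → β} {x : ℕ → β}
    (h : ∀ n, ∀ i < n, u n i = x i) : Tendsto u atTop (𝓝 x) :=
  tendsto_pi_nhds.2 fun i => tendsto_atTop_of_eventually_const (i₀ := i + 1) fun n hn => h n i hn

lemma continuous_count (n : ℕ) :
    Continuous fun T : ℕ → Bool => Nat.count (fun i => T i = true) n := by
  induction n with
  | zero => simpa using continuous_const
  | succ n ih =>
    simp only [Nat.count_succ]
    exact ih.add ((continuous_of_discreteTopology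
      (f := fun b : Bool => if b = true then 1 else 0)).comp (continuous_apply n))

lemma continuous_enumOf {X : Type*} [TopologicalSpace X] {f : X → ℕ → Bool} (hf : Continuous f)
    (hinf : ∀ x, {i | f x i = true}.Infinite) (k : ℕ) :
    Continuous fun x => enumOf (f x) k := by
  refine continuous_discrete_rng.2 fun n => ?_
  have hfiber : (fun x => enumOf (f x) k) ⁻¹' {n}
      = f ⁻¹' ({T | T n = true} ∩ {T | Nat.count (fun i => T i = true) n = k}) := by
    ext x
    simp only [Set.mem_preimage, Set.mem_singleton_iff, Set.mem_inter_iff, Set.mem_ofPred_eq]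
    exact ⟨fun h => h ▸
        ⟨Nat.nth_mem_of_infinite (hinf x) k, Nat.count_nth_of_infinite (hinf x) k⟩,
      fun ⟨hn, hc⟩ => hc ▸ Nat.nth_count hn⟩
  rw [hfiber]
  exact (((isOpen_discrete {true}).preimage (continuous_apply n)).inter
    ((isOpen_discrete {k}).preimage (continuous_count n))).preimage hf

section Gset

variable {N₀ : ℕ → Bool}

lemma isOpen_setOf_enumOf_eq (a b : ℕ) :
    IsOpen {p : SubsetsOf N₀ × SubsetsOf N₀ | enumOf p.1.1 a = enumOf p.2.1 b} := by
  have hc : ∀ k, Continuous fun S : SubsetsOf N₀ => enumOf S.1 k :=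
    continuous_enumOf continuous_subtype_val fun S => S.2.1
  exact (isOpen_discrete {q : ℕ × ℕ | q.1 = q.2}).preimage
    (((hc a).comp continuous_fst).prodMk ((hc b).comp continuous_snd))

lemma isGδ_Gset : IsGδ (Gset N₀) := by
  simp only [Gset, Set.ofPred_forall, Set.ofPred_exists, Set.ofPred_and]
  exact IsGδ.iInter fun i₀ => IsOpen.isGδ <| isOpen_iUnion fun i => isOpen_iUnion fun j =>
    isOpen_const.inter (isOpen_const.inter (isOpen_setOf_enumOf_eq _ _))

lemma exists_mem_Gset_forall_lt_eq (hN₀ : {i | N₀ i = true}.Infinite) (S R : SubsetsOf N₀)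
    (m : ℕ) : ∃ S' R' : SubsetsOf N₀,
      (∀ i < m, S'.1 i = S.1 i) ∧ (∀ i < m, R'.1 i = R.1 i) ∧ (S', R') ∈ Gset N₀ := by
  have hbeyond : {i | N₀ i = true ∧ m ≤ i}.Infinite :=
    (hN₀.sdiff (Set.finite_Iio m)).mono fun i hi => ⟨hi.1, not_lt.1 hi.2⟩
  obtain ⟨E₁, hE₁, hcard₁⟩ :=
    hbeyond.exists_subset_card_eq (Nat.count (fun i => R.1 i = true) m + 2)
  obtain ⟨E₂, hE₂, hcard₂⟩ :=
    hbeyond.exists_subset_card_eq (Nat.count (fun i => S.1 i = true) m)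
  obtain ⟨t, ht⟩ := (insert m (E₁ ∪ E₂)).exists_nat_subset_range
  have hmt : m ≤ t := (Finset.mem_range.1 (ht (Finset.mem_insert_self _ _))).le
  have hbetween : ∀ i ∈ E₁ ∪ E₂, m ≤ i ∧ i < t := fun i hi =>
    ⟨(Finset.mem_union.1 hi).elim (fun h => (hE₁ h).2) (fun h => (hE₂ h).2),
      Finset.mem_range.1 (ht (Finset.mem_insert_of_mem hi))⟩
  let S' : SubsetsOf N₀ :=
    ⟨patch S.1 m E₁ t N₀, infinite_patch hN₀ hmt,
      eq_true_of_patch_eq_true S.2.2 fun i hi => (hE₁ hi).1⟩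
  let R' : SubsetsOf N₀ :=
    ⟨patch R.1 m E₂ t N₀, infinite_patch hN₀ hmt,
      eq_true_of_patch_eq_true R.2.2 fun i hi => (hE₂ hi).1⟩
  have hcount :
      Nat.count (fun i => S'.1 i = true) t = Nat.count (fun i => R'.1 i = true) t + 2 := by
    rw [count_patch hmt fun i hi => hbetween i (Finset.mem_union_left _ hi),
      count_patch hmt fun i hi => hbetween i (Finset.mem_union_right _ hi), hcard₁, hcard₂]
    omega
  refine ⟨S', R', fun i => patch_of_lt, fun i => patch_of_lt,
    fun i₀ => exists_nth_two_mul_sub_one_eq R'.2.1 (fun i hi => ?_) hcount i₀⟩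
  show patch S.1 m E₁ t N₀ i = true ↔ patch R.1 m E₂ t N₀ i = true
  rw [patch_of_le hmt hi, patch_of_le hmt hi]

lemma dense_Gset (hN₀ : {i | N₀ i = true}.Infinite) : Dense (Gset N₀) := by
  rintro ⟨S, R⟩
  choose S' R' hS' hR' hG using exists_mem_Gset_forall_lt_eq hN₀ S R
  have hlim : ∀ {U : ℕ → SubsetsOf N₀} {V : SubsetsOf N₀},
      (∀ m, ∀ i < m, (U m).1 i = V.1 i) → Tendsto U atTop (𝓝 V) :=
    fun h => tendsto_subtype_rng.2 (tendsto_pi_of_forall_lt_eq h)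
  exact mem_closure_of_tendsto ((hlim hS').prodMk_nhds (hlim hR')) (Eventually.of_forall hG)

end Gset

theorem statement15 (N₀ : ℕ → Bool) (hN₀ : {i | N₀ i = true}.Infinite) :
    Dense (Gset N₀) ∧ IsGδ (Gset N₀) :=
  ⟨dense_Gset hN₀, isGδ_Gset⟩

end Gasparis
end
end
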